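/- arXiv:1210.4382 — 2 statements merged into one kernel-verified Lean document; each statement's English description precedes it below -/
import Mathlib

section
/- Let (X,ν) be a probability space, T: X → X measure-preserving, and φ ∈ L¹(X,ν) a function with ∫φ dν = 0. Define the essential image of φ as the set of t ∈ ℝ such that ν(φ⁻¹[t-ε, t+ε]) > 0 for every ε > 0. If the closed subgroup of ℝ generated by the essential image of φ equals αℤ for some α ≠ 0, then the set A = X × (αℤ + [0, α/4]) ⊆ X × ℝ satisfies: A is invariant under the skew product Φ(x,t) = (Tx, t + φ(x)) up to null sets, and both A and its complement have positive (in fact infinite) ν × Lebesgue measure. -/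
/-!
Off the null set where `φ` leaves its essential image (whose complement is open and locally
`φ`-null), `φ` takes values in `αℤ`. In the coordinate `s = t / α` the fibre of `A` is
`{s | fract s ≤ 1/4}`, which is invariant under integer translations, so `Φ` maps `A` into itself
up to a null set. The fibres of `A` and of `Aᶜ` are `α`-periodic sets of positive measure,
hence of infinite Lebesgue measure.
-/

open MeasureTheory Set
open scoped Pointwise

def essImage {X : Type*} [MeasurableSpace X] (ν : Measure X) (f : X → ℝ) : Set ℝ :=
  {t | ∀ ε : ℝ, 0 < ε → 0 < ν (f ⁻¹' Icc (t - ε) (t + ε))}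

theorem ae_mem_essImage {X : Type*} [MeasurableSpace X] (ν : Measure X) (f : X → ℝ) :
    ∀ᵐ x ∂ν, f x ∈ essImage ν f := by
  show OuterMeasure.map f ν.toOuterMeasure (essImage ν f)ᶜ = 0
  refine measure_null_of_locally_null _ fun t ht => ?_
  simp only [essImage, mem_compl_iff, mem_ofPred_eq, not_forall, not_lt, nonpos_iff_eq_zero] at ht
  obtain ⟨ε, hε, hnull⟩ := ht
  exact ⟨Icc (t - ε) (t + ε),
    mem_nhdsWithin_of_mem_nhds (Icc_mem_nhds (by linarith) (by linarith)), hnull⟩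

theorem exists_int_sub_mem_Icc_iff_fract_le {c : ℝ} (hc : c < 1) (s : ℝ) :
    (∃ m : ℤ, s - m ∈ Icc 0 c) ↔ Int.fract s ≤ c := by
  refine ⟨fun ⟨m, h₀, h₁⟩ => ?_, fun h => ⟨⌊s⌋, ?_⟩⟩
  · have : ⌊s⌋ = m := Int.floor_eq_iff.mpr ⟨by linarith, by linarith⟩
    rwa [← Int.self_sub_floor, this]
  · rw [mem_Icc, Int.self_sub_floor]
    exact ⟨Int.fract_nonneg s, h⟩

theorem setOf_exists_sub_mul_mem_uIcc {α c : ℝ} (hα : α ≠ 0) (hc₀ : 0 ≤ c) (hc₁ : c < 1) :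
    {t : ℝ | ∃ m : ℤ, t - α * m ∈ uIcc 0 (α * c)} = (fun t => Int.fract (t / α)) ⁻¹' Iic c := by
  ext t
  have hscale (m : ℤ) : t - α * m ∈ uIcc 0 (α * c) ↔ t / α - m ∈ Icc 0 c := by
    have h := (Set.ext_iff.mp (preimage_div_const_uIcc hα 0 c) (t - α * m)).symm
    rw [zero_mul, mul_comm c] at h
    rw [h, mem_preimage, uIcc_of_le hc₀, sub_div, mul_div_cancel_left₀ _ hα]
  simp only [mem_ofPred_eq, hscale, exists_int_sub_mem_Icc_iff_fract_le hc₁, mem_preimage,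
    mem_Iic]

theorem fract_add_div_of_mem_zmultiples {α g : ℝ} (hα : α ≠ 0)
    (hg : g ∈ AddSubgroup.zmultiples α) (t : ℝ) :
    Int.fract ((t + g) / α) = Int.fract (t / α) := by
  obtain ⟨k, rfl⟩ := hg
  change Int.fract ((t + k • α) / α) = _
  rw [zsmul_eq_mul, add_div, mul_div_cancel_right₀ _ hα, Int.fract_add_intCast]

theorem volume_preimage_fract_eq_top {U : Set ℝ} (hU : volume (U ∩ Ico 0 1) ≠ 0) :
    volume (Int.fract ⁻¹' U) = ⊤ := by
  set G := AddSubgroup.zmultiples (1 : ℝ)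
  have hinv (g : G) : g +ᵥ Int.fract ⁻¹' U = Int.fract ⁻¹' U := by
    obtain ⟨_, k, rfl⟩ := g
    ext t
    simp [mem_vadd_set_iff_neg_vadd_mem, vadd_eq_add, neg_add_eq_sub]
  have hsum := (isAddFundamentalDomain_Ioc one_pos 0).measure_eq_tsum (Int.fract ⁻¹' U)
  simp only [hinv, zero_add] at hsum
  have : Infinite G := Infinite.of_injective (fun k : ℤ => (⟨k, k, by simp⟩ : G))
    fun k l h => by simpa using congrArg Subtype.val h
  refine hsum.trans (ENNReal.tsum_const_eq_top_of_ne_zero fun h0 => hU ?_)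
  refine measure_mono_null (fun x ⟨hxU, hx⟩ => ?_) (hsum.trans (by simp [h0]))
  simpa [Int.fract_eq_self.mpr hx] using hxU

theorem volume_preimage_fract_div_eq_top {α : ℝ} (hα : α ≠ 0) {U : Set ℝ}
    (hU : volume (U ∩ Ico 0 1) ≠ 0) : volume ((fun t => Int.fract (t / α)) ⁻¹' U) = ⊤ := by
  change volume ((· * α⁻¹) ⁻¹' (Int.fract ⁻¹' U)) = ⊤
  rw [Real.volume_preimage_mul_right (inv_ne_zero hα), volume_preimage_fract_eq_top hU]
  exact ENNReal.mul_top (by simpa using hα)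

theorem measure_symmDiff_preimage_skewProduct_eq_zero {X Y : Type*} [MeasurableSpace X]
    [MeasurableSpace Y] [Add Y] (ν : Measure X) (μ : Measure Y) (T : X → X) (f : X → Y)
    {S : Set Y} (hS : ∀ᵐ x ∂ν, ∀ y, y + f x ∈ S ↔ y ∈ S) :
    (ν.prod μ) (symmDiff (Prod.snd ⁻¹' S)
      ((fun p : X × Y => (T p.1, p.2 + f p.1)) ⁻¹' (Prod.snd ⁻¹' S))) = 0 := by
  rw [measure_symmDiff_eq_zero_iff]
  filter_upwards [Measure.quasiMeasurePreserving_fst.ae hS] with p hp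
  exact propext (hp p.2).symm

theorem stmt_7_general {X : Type*} [MeasurableSpace X] (ν : Measure X) [IsProbabilityMeasure ν]
    (T : X → X)
    (φ : X → ℝ)
    (α : ℝ) (hα : α ≠ 0)
    (hgen : (AddSubgroup.closure
        {t : ℝ | ∀ ε : ℝ, 0 < ε → 0 < ν (φ ⁻¹' Set.Icc (t - ε) (t + ε))}).topologicalClosure
      = AddSubgroup.zmultiples α) :
    (ν.prod volume)
        (symmDiff {p : X × ℝ | ∃ m : ℤ, p.2 - α * m ∈ Set.uIcc 0 (α / 4)}
          ((fun p : X × ℝ => (T p.1, p.2 + φ p.1)) ⁻¹'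
            {p : X × ℝ | ∃ m : ℤ, p.2 - α * m ∈ Set.uIcc 0 (α / 4)})) = 0 ∧
      (ν.prod volume) {p : X × ℝ | ∃ m : ℤ, p.2 - α * m ∈ Set.uIcc 0 (α / 4)} = ⊤ ∧
      (ν.prod volume) {p : X × ℝ | ∃ m : ℤ, p.2 - α * m ∈ Set.uIcc 0 (α / 4)}ᶜ = ⊤ := by
  have hA : {p : X × ℝ | ∃ m : ℤ, p.2 - α * m ∈ Set.uIcc 0 (α / 4)} =
      Prod.snd ⁻¹' ((fun t => Int.fract (t / α)) ⁻¹' Iic 4⁻¹) := by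
    rw [div_eq_mul_inv α 4, ← setOf_exists_sub_mul_mem_uIcc hα (by norm_num) (by norm_num)]
    rfl
  have hφ : ∀ᵐ x ∂ν, φ x ∈ AddSubgroup.zmultiples α := (ae_mem_essImage ν φ).mono fun _ hx =>
    hgen ▸ AddSubgroup.le_topologicalClosure _ (AddSubgroup.subset_closure hx)
  rw [hA, ← preimage_compl, ← preimage_compl, compl_Iic]
  refine ⟨measure_symmDiff_preimage_skewProduct_eq_zero ν volume T φ (hφ.mono fun x hx t => ?_),
    ?_, ?_⟩
  · simp only [mem_preimage, fract_add_div_of_mem_zmultiples hα hx]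
  all_goals rw [← univ_prod, Measure.prod_prod, measure_univ, one_mul]
  all_goals refine volume_preimage_fract_div_eq_top hα fun h => ?_
  · exact isOpen_Ioo.measure_ne_zero volume (nonempty_Ioo.mpr (by norm_num : (0 : ℝ) < 4⁻¹))
      (measure_mono_null (fun x hx => by exact ⟨hx.2.le, hx.1.le, hx.2.trans (by norm_num)⟩) h)
  · exact isOpen_Ioo.measure_ne_zero volume (nonempty_Ioo.mpr (by norm_num : (4 : ℝ)⁻¹ < 1))
      (measure_mono_null (fun x hx => by exact ⟨hx.1, by linarith [hx.1], hx.2⟩) h)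

/-- If the closed subgroup generated by the essential image of a zero-mean `φ ∈ L¹(X,ν)`
equals `αℤ` with `α ≠ 0`, then `A = X × (αℤ + [0,α/4])` is invariant (mod null sets)
under the skew product `Φ(x,t) = (Tx, t+φ(x))` on `X × ℝ`, and both `A` and its
complement have infinite (in particular positive) `ν × Leb` measure. -/
theorem stmt_7 {X : Type*} [MeasurableSpace X] (ν : Measure X) [IsProbabilityMeasure ν]
    (T : X → X) (hT : MeasurePreserving T ν ν)
    (φ : X → ℝ) (hφmeas : Measurable φ) (hφint : Integrable φ ν)
    (hφ0 : ∫ x, φ x ∂ν = 0)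
    (α : ℝ) (hα : α ≠ 0)
    (hgen : (AddSubgroup.closure
        {t : ℝ | ∀ ε : ℝ, 0 < ε → 0 < ν (φ ⁻¹' Set.Icc (t - ε) (t + ε))}).topologicalClosure
      = AddSubgroup.zmultiples α) :
    (ν.prod volume)
        (symmDiff {p : X × ℝ | ∃ m : ℤ, p.2 - α * m ∈ Set.uIcc 0 (α / 4)}
          ((fun p : X × ℝ => (T p.1, p.2 + φ p.1)) ⁻¹'
            {p : X × ℝ | ∃ m : ℤ, p.2 - α * m ∈ Set.uIcc 0 (α / 4)})) = 0 ∧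
      (ν.prod volume) {p : X × ℝ | ∃ m : ℤ, p.2 - α * m ∈ Set.uIcc 0 (α / 4)} = ⊤ ∧
      (ν.prod volume) {p : X × ℝ | ∃ m : ℤ, p.2 - α * m ∈ Set.uIcc 0 (α / 4)}ᶜ = ⊤ :=
  stmt_7_general ν T φ α hα hgen
end

section
/- Let (Ω, μ) be a two-sided shift of finite type with an irreducible Markov probability μ, and let A ⊆ [ω_n = ω̄_n] be a measurable subset of a cylinder such that for μ-almost every ω̃ ∈ A, both the s-set [ω_i = ω̃_i, i ≥ n] and the u-set [ω_i = ω̃_i, i ≤ n] are contained in A. If μ(A) > 0, then A equals the cylinder [ω_n = ω̄_n] (mod μ). -/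
open MeasureTheory


def rmap {k : ℕ} (n : ℤ) (m : ℕ) : (ℤ → Fin k) → (Fin (2*m+1) → Fin k) :=
  fun ω j => ω (n - m + j)

def wext {k : ℕ} (n : ℤ) (m : ℕ) (v : Fin (2*m+1) → Fin k) : ℤ → Fin k :=
  fun i => if h : 0 ≤ i - (n - m) ∧ i - (n - m) < 2*m+1 then
    v ⟨(i - (n - m)).toNat, by omega⟩ else v ⟨0, by omega⟩

lemma sing_eq {k : ℕ} (n : ℤ) (m : ℕ) (v : Fin (2*m+1) → Fin k) :
    rmap n m ⁻¹' {v}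
      = {ω : ℤ → Fin k | ∀ i : ℤ, n - m ≤ i → i ≤ (n - m) + (2*m : ℕ) → ω i = wext n m v i} := by
  ext ω
  simp only [Set.mem_preimage, Set.mem_singleton_iff, Set.mem_setOf_eq]
  constructor
  · intro h i h1 h2
    push_cast at h2
    have hlt : (i - (n - m)).toNat < 2*m+1 := by omega
    have h3 : n - m + (((i - (n - m)).toNat : ℕ) : ℤ) = i := by omega
    have hv := congrFun h ⟨(i - (n - m)).toNat, hlt⟩
    simp only [rmap] at hv
    rw [h3] at hv
    rw [hv, wext, dif_pos (⟨by omega, by omega⟩ : 0 ≤ i - (n - m) ∧ i - (n - m) < 2*m+1)]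
  · intro h
    funext j
    have hb2 : n - m + (j : ℤ) ≤ (n - m) + (2*m : ℕ) := by
      have := j.isLt; push_cast; omega

    have hjlt := j.isLt
    have hω := h (n - m + j) (by omega) hb2
    simp only [rmap]
    rw [hω, wext, dif_pos (⟨by omega, by omega⟩
      : 0 ≤ (n - m + j) - (n - m) ∧ (n - m + j) - (n - m) < 2*m+1)]
    congr 1
    apply Fin.ext
    simp only
    omega



def Scyl (k : ℕ) (n : ℤ) : Set (Set (ℤ → Fin k)) :=
  {E | ∃ (m : ℕ) (T : Set (Fin (2*m+1) → Fin k)), E = rmap n m ⁻¹' T}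

lemma rmap_lift {k : ℕ} (n : ℤ) {m m' : ℕ} (h : m ≤ m') (T : Set (Fin (2*m+1) → Fin k)) :
    rmap n m ⁻¹' T
      = rmap n m' ⁻¹' ((fun g (j : Fin (2*m+1)) => g ⟨(m' - m) + j, by omega⟩) ⁻¹' T) := by
  ext ω
  simp only [Set.mem_preimage]
  have : (fun j : Fin (2*m+1) => rmap n m' ω ⟨(m' - m) + j, by omega⟩) = rmap n m ω := by
    funext j
    simp only [rmap]
    congr 1
    have : ((m' - m : ℕ) : ℤ) = (m' : ℤ) - m := by omega
    push_cast [this]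
    ring
  rw [← this]

lemma isPiSystem_Scyl (k : ℕ) (n : ℤ) : IsPiSystem (Scyl k n) := by
  rintro E1 ⟨m1, T1, rfl⟩ E2 ⟨m2, T2, rfl⟩ -
  rcases le_total m1 m2 with h | h
  · rw [rmap_lift n h T1]
    exact ⟨m2, _ ∩ T2, by rw [Set.preimage_inter]⟩
  · rw [rmap_lift n h T2]
    exact ⟨m1, T1 ∩ _, by rw [Set.preimage_inter]⟩

lemma measurable_rmap {k : ℕ} (n : ℤ) (m : ℕ) : Measurable (rmap (k := k) n m) :=
  measurable_pi_lambda _ fun j => measurable_pi_apply _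

lemma generateFrom_Scyl (k : ℕ) (n : ℤ) :
    (MeasurableSpace.pi : MeasurableSpace (ℤ → Fin k))
      = MeasurableSpace.generateFrom (Scyl k n) := by
  apply le_antisymm
  · rw [MeasurableSpace.pi]
    apply iSup_le
    intro i
    rw [← measurable_iff_comap_le]
    intro s _
    refine MeasurableSpace.measurableSet_generateFrom ?_
    refine ⟨(i - n).natAbs, {g | g ⟨(i - (n - (i - n).natAbs)).toNat, by omega⟩ ∈ s}, ?_⟩
    ext ω
    simp only [Set.mem_preimage, Set.mem_setOf_eq, rmap]
    have : n - ((i - n).natAbs : ℤ) + ((i - (n - (i - n).natAbs)).toNat : ℤ) = i := by omega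
    rw [this]
  · rw [MeasurableSpace.generateFrom_le_iff]
    rintro E ⟨m, T, rfl⟩
    exact measurable_rmap n m (T.toFinite.measurableSet)


-- basic cylinder measurability
lemma measCyl {k : ℕ} (a b : ℤ) (w : ℤ → Fin k) :
    MeasurableSet {x : ℤ → Fin k | ∀ i, a ≤ i → i ≤ b → x i = w i} := by
  have h : {x : ℤ → Fin k | ∀ i, a ≤ i → i ≤ b → x i = w i}
      = ⋂ i, ⋂ (_ : a ≤ i ∧ i ≤ b), (fun x : ℤ → Fin k => x i) ⁻¹' {w i} := by
    ext x; simp [and_imp]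
  rw [h]
  exact .iInter fun i => .iInter fun _ => (measurable_pi_apply i) (measurableSet_singleton _)

-- the splice map is measurable
lemma measF {k : ℕ} (n : ℤ) :
    Measurable (fun p : (ℤ → Fin k) × (ℤ → Fin k) => fun i => if i ≤ n then p.2 i else p.1 i) := by
  apply measurable_pi_lambda
  intro i
  by_cases h : i ≤ n <;> simp only [h, if_true, if_false] <;>
    exact (measurable_pi_apply i).comp (by measurability)


variable {k : ℕ} (π : Fin k → ℝ) (P : Matrix (Fin k) (Fin k) ℝ)

-- master cylinder computation
lemma master (hπ0 : ∀ i, 0 ≤ π i) (hP0 : ∀ i j, 0 ≤ P i j)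
    (μ : Measure (ℤ → Fin k)) [IsProbabilityMeasure μ]
    (hμcyl : ∀ (a : ℤ) (l : ℕ) (w : ℤ → Fin k),
      μ {ω : ℤ → Fin k | ∀ i : ℤ, a ≤ i → i ≤ a + l → ω i = w i}
        = ENNReal.ofReal
            (π (w a) * ∏ j ∈ Finset.range l, P (w (a + j)) (w (a + j + 1))))
    (n : ℤ) (ωbar : ℤ → Fin k) (m : ℕ) (w : ℤ → Fin k) :
    (μ.prod μ) ((fun p : (ℤ → Fin k) × (ℤ → Fin k) => fun i => if i ≤ n then p.2 i else p.1 i)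
        ⁻¹' {ω | ∀ i : ℤ, n - m ≤ i → i ≤ (n - m) + (2*m : ℕ) → ω i = w i}
        ∩ ({ω | ω n = ωbar n} ×ˢ {ω | ω n = ωbar n}))
      = μ ({ω | ∀ i : ℤ, n - m ≤ i → i ≤ (n - m) + (2*m : ℕ) → ω i = w i}
            ∩ {ω | ω n = ωbar n}) * μ {ω | ω n = ωbar n} := by
  have hC : μ {ω : ℤ → Fin k | ω n = ωbar n} = ENNReal.ofReal (π (ωbar n)) := by
    have h0 := hμcyl n 0 ωbar
    simp only [Nat.cast_zero, add_zero, Finset.range_zero, Finset.prod_empty, mul_one] at h0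
    rw [← h0]
    congr 1
    ext ω
    constructor
    · intro h; exact fun i h1 h2 => by have : i = n := le_antisymm h2 h1; rw [this]; exact h
    · intro h; exact h n le_rfl le_rfl
  by_cases hwn : w n = ωbar n
  · -- main case
    have hEC : {ω : ℤ → Fin k | ∀ i : ℤ, n - m ≤ i → i ≤ (n - m) + (2*m : ℕ) → ω i = w i}
        ∩ {ω | ω n = ωbar n}
        = {ω | ∀ i : ℤ, n - m ≤ i → i ≤ (n - m) + (2*m : ℕ) → ω i = w i} := by
      apply Set.inter_eq_self_of_subset_left
      intro ω hω
      have := hω n (by omega) (by push_cast; omega)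
      simp only [Set.mem_setOf_eq, this, hwn]
    have hrect : (fun p : (ℤ → Fin k) × (ℤ → Fin k) => fun i => if i ≤ n then p.2 i else p.1 i)
        ⁻¹' {ω | ∀ i : ℤ, n - m ≤ i → i ≤ (n - m) + (2*m : ℕ) → ω i = w i}
        ∩ ({ω | ω n = ωbar n} ×ˢ {ω | ω n = ωbar n})
        = {x : ℤ → Fin k | ∀ i : ℤ, n ≤ i → i ≤ n + (m : ℕ) → x i = w i}
          ×ˢ {x : ℤ → Fin k | ∀ i : ℤ, n - m ≤ i → i ≤ (n - m) + (m : ℕ) → x i = w i} := by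
      ext p
      simp only [Set.mem_inter_iff, Set.mem_preimage, Set.mem_setOf_eq, Set.mem_prod]
      constructor
      · rintro ⟨hF, h1, h2⟩
        constructor
        · intro i hi1 hi2
          rcases eq_or_lt_of_le hi1 with rfl | hlt
          · rw [h1, hwn]
          · have := hF i (by omega) (by push_cast; push_cast at hi2; omega)
            simpa [not_le.mpr hlt] using this
        · intro i hi1 hi2
          have hle : i ≤ n := by push_cast at hi2; omega
          have := hF i (by omega) (by push_cast; omega)
          simpa [hle] using this
      · rintro ⟨h1, h2⟩
        refine ⟨?_, ?_, ?_⟩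
        · intro i hi1 hi2
          by_cases hle : i ≤ n
          · simp only [hle, if_true]
            exact h2 i hi1 (by push_cast; omega)
          · simp only [hle, if_false]
            exact h1 i (by omega) (by push_cast; push_cast at hi2; omega)
        · rw [h1 n le_rfl (by push_cast; omega), hwn]
        · rw [h2 n (by omega) (by push_cast; omega), hwn]
    rw [hEC, hrect, Measure.prod_prod, hμcyl, hμcyl, hμcyl, hC]
    have hcongr : ∀ j ∈ Finset.range m,
        P (w (n - m + (m + j : ℕ))) (w (n - m + (m + j : ℕ) + 1))
          = P (w (n + j)) (w (n + j + 1)) := by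
      intro j _
      congr 2 <;> push_cast <;> ring_nf
    have hsplit : ∏ j ∈ Finset.range (2*m), P (w (n - m + j)) (w (n - m + j + 1))
        = (∏ j ∈ Finset.range m, P (w (n - m + j)) (w (n - m + j + 1)))
          * ∏ j ∈ Finset.range m, P (w (n + j)) (w (n + j + 1)) := by
      have h2m : (2*m) = m + m := by ring
      rw [h2m, Finset.prod_range_add]
      exact congrArg _ (Finset.prod_congr rfl hcongr)
    have key : (π (w n) * ∏ j ∈ Finset.range m, P (w (n + j)) (w (n + j + 1)))
        * (π (w (n - m)) * ∏ j ∈ Finset.range m, P (w (n - m + j)) (w (n - m + j + 1)))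
        = (π (w (n - m)) * ∏ j ∈ Finset.range (2*m), P (w (n - m + j)) (w (n - m + j + 1)))
          * π (ωbar n) := by
      rw [hsplit, ← hwn]
      ring
    have nn : ∀ (a : ℤ) (c : ℕ), 0 ≤ π (w a) * ∏ j ∈ Finset.range c, P (w (a + j)) (w (a + j + 1)) :=
      fun a c => mul_nonneg (hπ0 _) (Finset.prod_nonneg fun j _ => hP0 _ _)
    rw [← ENNReal.ofReal_mul (nn n m), ← ENNReal.ofReal_mul (nn (n-m) (2*m)), key]
  · -- degenerate case: both sides are zero
    have hEC : {ω : ℤ → Fin k | ∀ i : ℤ, n - m ≤ i → i ≤ (n - m) + (2*m : ℕ) → ω i = w i}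
        ∩ {ω | ω n = ωbar n} = ∅ := by
      ext ω
      simp only [Set.mem_inter_iff, Set.mem_setOf_eq, Set.mem_empty_iff_false, iff_false, not_and]
      intro hω hn
      exact hwn (by rw [← hω n (by omega) (by push_cast; omega), hn])
    have hF0 : (fun p : (ℤ → Fin k) × (ℤ → Fin k) => fun i => if i ≤ n then p.2 i else p.1 i)
        ⁻¹' {ω | ∀ i : ℤ, n - m ≤ i → i ≤ (n - m) + (2*m : ℕ) → ω i = w i}
        ∩ ({ω | ω n = ωbar n} ×ˢ {ω | ω n = ωbar n}) = ∅ := by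
      rw [Set.eq_empty_iff_forall_notMem]
      rintro p ⟨hF, hp⟩
      have h := hF n (by omega) (by push_cast; omega)
      simp only [le_refl, if_true] at h
      exact hwn (by rw [← h]; exact hp.2)
    rw [hEC, hF0]
    simp


lemma prodIdentity (hπ0 : ∀ i, 0 ≤ π i) (hP0 : ∀ i j, 0 ≤ P i j)
    (μ : Measure (ℤ → Fin k)) [IsProbabilityMeasure μ]
    (hμcyl : ∀ (a : ℤ) (l : ℕ) (w : ℤ → Fin k),
      μ {ω : ℤ → Fin k | ∀ i : ℤ, a ≤ i → i ≤ a + l → ω i = w i}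
        = ENNReal.ofReal
            (π (w a) * ∏ j ∈ Finset.range l, P (w (a + j)) (w (a + j + 1))))
    (n : ℤ) (ωbar : ℤ → Fin k) :
    Measure.map (fun p : (ℤ → Fin k) × (ℤ → Fin k) => fun i => if i ≤ n then p.2 i else p.1 i)
        ((μ.prod μ).restrict ({ω | ω n = ωbar n} ×ˢ {ω | ω n = ωbar n}))
      = μ {ω | ω n = ωbar n} • μ.restrict {ω | ω n = ωbar n} := by
  set C : Set (ℤ → Fin k) := {ω | ω n = ωbar n} with hCdef
  have hCmeas : MeasurableSet C := by
    have : C = (fun ω : ℤ → Fin k => ω n) ⁻¹' {ωbar n} := rfl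
    rw [this]
    exact (measurable_pi_apply n) (measurableSet_singleton (ωbar n))
  have hF : Measurable (fun p : (ℤ → Fin k) × (ℤ → Fin k) => fun i => if i ≤ n then p.2 i else p.1 i) :=
    measF n
  have happ : ∀ E : Set (ℤ → Fin k), MeasurableSet E →
      (Measure.map (fun p : (ℤ → Fin k) × (ℤ → Fin k) => fun i => if i ≤ n then p.2 i else p.1 i)
        ((μ.prod μ).restrict (C ×ˢ C))) E
      = (μ.prod μ) ((fun p : (ℤ → Fin k) × (ℤ → Fin k) => fun i => if i ≤ n then p.2 i else p.1 i)
          ⁻¹' E ∩ (C ×ˢ C)) := by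
    intro E hE
    rw [Measure.map_apply hF hE, Measure.restrict_apply (hF hE)]
  have happ2 : ∀ E : Set (ℤ → Fin k), MeasurableSet E →
      (μ C • μ.restrict C) E = μ (E ∩ C) * μ C := by
    intro E hE
    rw [Measure.smul_apply, Measure.restrict_apply hE, smul_eq_mul, mul_comm]
  haveI : IsFiniteMeasure (Measure.map
      (fun p : (ℤ → Fin k) × (ℤ → Fin k) => fun i => if i ≤ n then p.2 i else p.1 i)
      ((μ.prod μ).restrict (C ×ˢ C))) := by
    constructor
    rw [happ _ MeasurableSet.univ]
    exact lt_of_le_of_lt (measure_mono (Set.inter_subset_right)) (measure_lt_top _ _)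
  refine ext_of_generate_finite (Scyl k n) (generateFrom_Scyl k n) (isPiSystem_Scyl k n) ?_ ?_
  · rintro E ⟨m, T, rfl⟩
    have hTmeas : MeasurableSet (rmap (k := k) n m ⁻¹' T) :=
      measurable_rmap n m T.toFinite.measurableSet
    have hdecomp : rmap (k := k) n m ⁻¹' T = ⋃ v ∈ T, rmap n m ⁻¹' {v} :=
      (Set.biUnion_preimage_singleton (rmap n m) T).symm
    have hsmeas : ∀ v : Fin (2*m+1) → Fin k, MeasurableSet (rmap (k := k) n m ⁻¹' {v}) :=
      fun v => measurable_rmap n m (measurableSet_singleton v)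
    have hdisj : T.PairwiseDisjoint (fun v => rmap (k := k) n m ⁻¹' {v}) := by
      intro v _ v' _ hne
      exact Disjoint.preimage _ (Set.disjoint_singleton.mpr hne)
    rw [hdecomp, measure_biUnion T.to_countable hdisj (fun v _ => hsmeas v),
      measure_biUnion T.to_countable hdisj (fun v _ => hsmeas v)]
    apply tsum_congr
    intro v
    rw [happ _ (hsmeas v.val), happ2 _ (hsmeas v.val),
      sing_eq n m (v.val : Fin (2*m+1) → Fin k)]
    exact master π P hπ0 hP0 μ hμcyl n ωbar m (wext n m v.val)
  · rw [happ _ MeasurableSet.univ, happ2 _ MeasurableSet.univ]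
    simp only [Set.preimage_univ, Set.univ_inter]
    rw [Measure.prod_prod]


lemma suppNull (hP0 : ∀ i j, 0 ≤ P i j)
    (μ : Measure (ℤ → Fin k))
    (hμcyl : ∀ (a : ℤ) (l : ℕ) (w : ℤ → Fin k),
      μ {ω : ℤ → Fin k | ∀ i : ℤ, a ≤ i → i ≤ a + l → ω i = w i}
        = ENNReal.ofReal
            (π (w a) * ∏ j ∈ Finset.range l, P (w (a + j)) (w (a + j + 1)))) :
    μ {ω : ℤ → Fin k | ¬ ∀ i : ℤ, 0 < P (ω i) (ω (i + 1))} = 0 := by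
  apply measure_mono_null (t := ⋃ (i : ℤ), ⋃ (q : Fin k × Fin k), ⋃ (_ : ¬ 0 < P q.1 q.2),
    {ω : ℤ → Fin k | ω i = q.1 ∧ ω (i + 1) = q.2})
  · intro ω hω
    simp only [Set.mem_setOf_eq, not_forall] at hω
    obtain ⟨i, hi⟩ := hω
    exact Set.mem_iUnion.mpr ⟨i, Set.mem_iUnion.mpr ⟨(ω i, ω (i+1)),
      Set.mem_iUnion.mpr ⟨hi, ⟨rfl, rfl⟩⟩⟩⟩
  · refine measure_iUnion_null fun i => measure_iUnion_null fun q => measure_iUnion_null fun hq => ?_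
    have hw : {ω : ℤ → Fin k | ω i = q.1 ∧ ω (i + 1) = q.2}
        = {ω : ℤ → Fin k | ∀ j : ℤ, i ≤ j → j ≤ i + (1 : ℕ) → ω j
            = (fun j : ℤ => if j = i then q.1 else q.2) j} := by
      ext ω
      simp only [Set.mem_setOf_eq, Nat.cast_one]
      constructor
      · rintro ⟨h1, h2⟩ j hj1 hj2
        rcases eq_or_lt_of_le hj1 with rfl | hlt
        · simpa using h1
        · have hj : j = i + 1 := by omega
          subst hj
          simpa [show ¬ (i + 1 = i) by omega] using h2
      · intro h
        refine ⟨by simpa using h i le_rfl (by omega), ?_⟩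
        simpa [show ¬ (i + 1 = i) by omega] using h (i+1) (by omega) le_rfl
    rw [hw, hμcyl]
    have hP : P q.1 q.2 = 0 := le_antisymm (not_lt.mp hq) (hP0 _ _)
    rw [Finset.prod_range_one]
    simp only [Nat.cast_zero, add_zero, if_pos rfl, show ¬ (i + 1 = i) by omega, if_false,
      if_neg (show ¬ (i + (0:ℤ) + 1 = i) by omega)]
    norm_num [hP]


/-- In a two-sided shift of finite type with an irreducible stationary Markov
probability `μ`, any positive-measure subset `A` of a 1-cylinder `[ω_n = ω̄_n]` which
is (mod `μ`) saturated by both the s-sets `[ω_i = ω̃_i, i ≥ n]` and the u-sets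
`[ω_i = ω̃_i, i ≤ n]` of its points equals the cylinder mod `μ`. -/
theorem stmt_8 {k : ℕ} (hk : 0 < k)
    (π : Fin k → ℝ) (P : Matrix (Fin k) (Fin k) ℝ)
    (hπ0 : ∀ i, 0 ≤ π i) (hπ1 : ∑ i, π i = 1)
    (hP0 : ∀ i j, 0 ≤ P i j) (hP1 : ∀ i, ∑ j, P i j = 1)
    (hstat : ∀ j, ∑ i, π i * P i j = π j)
    (hirr : ∀ i j : Fin k, ∃ m : ℕ, 0 < m ∧ 0 < (P ^ m) i j)
    (μ : Measure (ℤ → Fin k)) [IsProbabilityMeasure μ]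
    (hμcyl : ∀ (a : ℤ) (l : ℕ) (w : ℤ → Fin k),
      μ {ω : ℤ → Fin k | ∀ i : ℤ, a ≤ i → i ≤ a + l → ω i = w i}
        = ENNReal.ofReal
            (π (w a) * ∏ j ∈ Finset.range l, P (w (a + j)) (w (a + j + 1))))
    (n : ℤ) (ωbar : ℤ → Fin k)
    (A : Set (ℤ → Fin k)) (hAmeas : MeasurableSet A)
    (hAsub : A ⊆ {ω : ℤ → Fin k | ω n = ωbar n})
    (hsat : ∀ᵐ ωtil ∂μ, ωtil ∈ A →
      ({ω : ℤ → Fin k | (∀ i : ℤ, 0 < P (ω i) (ω (i + 1))) ∧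
          ∀ i : ℤ, n ≤ i → ω i = ωtil i} ⊆ A ∧
        {ω : ℤ → Fin k | (∀ i : ℤ, 0 < P (ω i) (ω (i + 1))) ∧
          ∀ i : ℤ, i ≤ n → ω i = ωtil i} ⊆ A))
    (hApos : 0 < μ A) :
    μ ({ω : ℤ → Fin k | ω n = ωbar n} \ A) = 0 := by
  classical
  set C : Set (ℤ → Fin k) := {ω | ω n = ωbar n} with hCdef
  -- null sets
  have hsupp : μ {ω : ℤ → Fin k | ¬ ∀ i : ℤ, 0 < P (ω i) (ω (i + 1))} = 0 :=
    suppNull π P hP0 μ hμcyl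
  have hsuppmeas : MeasurableSet {ω : ℤ → Fin k | ∀ i : ℤ, 0 < P (ω i) (ω (i + 1))} := by
    have h : {ω : ℤ → Fin k | ∀ i : ℤ, 0 < P (ω i) (ω (i + 1))}
        = ⋂ i : ℤ, (fun ω : ℤ → Fin k => (ω i, ω (i + 1))) ⁻¹' {q : Fin k × Fin k | 0 < P q.1 q.2} := by
      ext ω; simp
    rw [h]
    exact MeasurableSet.iInter fun i =>
      (((measurable_pi_apply i).prodMk (measurable_pi_apply (i + 1))))
        ((Set.toFinite _).measurableSet)
  obtain ⟨N, hNsub, hNmeas, hN0⟩ := exists_measurable_superset_of_null (ae_iff.mp hsat)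
  set N' : Set (ℤ → Fin k) := N ∪ {ω | ∀ i : ℤ, 0 < P (ω i) (ω (i + 1))}ᶜ with hN'def
  have hN'meas : MeasurableSet N' := hNmeas.union hsuppmeas.compl
  have hN'0 : μ N' = 0 := by
    apply measure_union_null hN0
    exact hsupp
  -- product identity applied to N'
  have hPI := prodIdentity π P hπ0 hP0 μ hμcyl n ωbar
  have h0 : (μ.prod μ)
      ((fun p : (ℤ → Fin k) × (ℤ → Fin k) => fun i => if i ≤ n then p.2 i else p.1 i) ⁻¹' N'
        ∩ (C ×ˢ C)) = 0 := by
    have h1 : (Measure.map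
        (fun p : (ℤ → Fin k) × (ℤ → Fin k) => fun i => if i ≤ n then p.2 i else p.1 i)
        ((μ.prod μ).restrict (C ×ˢ C))) N' = 0 := by
      rw [hPI, Measure.smul_apply, Measure.restrict_apply hN'meas, smul_eq_mul]
      rw [measure_mono_null Set.inter_subset_left hN'0]
      simp
    rwa [Measure.map_apply (measF n) hN'meas,
      Measure.restrict_apply ((measF n) hN'meas)] at h1
  -- Fubini
  have hae : ∀ᵐ x ∂μ, ∀ᵐ y ∂μ,
      ¬ ((fun i => if i ≤ n then y i else x i) ∈ N' ∧ x ∈ C ∧ y ∈ C) := by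
    have hnm := measure_eq_zero_iff_ae_notMem.mp h0
    have h2 := Measure.ae_ae_of_ae_prod hnm
    filter_upwards [h2] with x hx
    filter_upwards [hx] with y hy
    intro hmem
    exact hy ⟨hmem.1, hmem.2.1, hmem.2.2⟩
  -- choose ω0
  have hNae : ∀ᵐ x ∂μ, x ∉ N := measure_eq_zero_iff_ae_notMem.mp hN0
  have hsuppae : ∀ᵐ x ∂μ, ∀ i : ℤ, 0 < P (x i) (x (i + 1)) := by
    have := measure_eq_zero_iff_ae_notMem.mp hsupp
    filter_upwards [this] with x hx
    simpa using hx
  have hconj := hNae.and (hsuppae.and hae)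
  have hnonempty : (A ∩ {x | x ∉ N ∧ (∀ i : ℤ, 0 < P (x i) (x (i + 1))) ∧
      ∀ᵐ y ∂μ, ¬ ((fun i => if i ≤ n then y i else x i) ∈ N' ∧ x ∈ C ∧ y ∈ C)}).Nonempty := by
    rw [Set.nonempty_iff_ne_empty]
    intro hemp
    have hsubset : A ⊆ {x | ¬ (x ∉ N ∧ (∀ i : ℤ, 0 < P (x i) (x (i + 1))) ∧
        ∀ᵐ y ∂μ, ¬ ((fun i => if i ≤ n then y i else x i) ∈ N' ∧ x ∈ C ∧ y ∈ C))} := by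
      intro x hx
      intro hcon
      exact Set.eq_empty_iff_forall_notMem.mp hemp x ⟨hx, hcon⟩
    have : μ A = 0 := measure_mono_null hsubset (ae_iff.mp hconj)
    exact absurd this (ne_of_gt hApos)
  obtain ⟨ω0, hω0A, hω0N, hω0supp, hω0Q⟩ :
      ∃ ω0, ω0 ∈ A ∧ ω0 ∉ N ∧ (∀ i : ℤ, 0 < P (ω0 i) (ω0 (i + 1))) ∧
        ∀ᵐ y ∂μ, ¬ ((fun i => if i ≤ n then y i else ω0 i) ∈ N' ∧ ω0 ∈ C ∧ y ∈ C) := by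
    obtain ⟨x, hx1, hx2⟩ := hnonempty
    exact ⟨x, hx1, hx2.1, hx2.2.1, hx2.2.2⟩
  have hω0C : ω0 ∈ C := hAsub hω0A
  -- main a.e. argument
  have hmain : ∀ᵐ y ∂μ, y ∈ C → y ∈ A := by
    filter_upwards [hsuppae, hω0Q] with y hy1 hy2 hyC
    set ψ : ℤ → Fin k := fun i => if i ≤ n then y i else ω0 i with hψdef
    have hψN' : ψ ∉ N' := fun hmem => hy2 ⟨hmem, hω0C, hyC⟩
    have hyn : y n = ω0 n := by
      have h1 : y n = ωbar n := hyC
      have h2 : ω0 n = ωbar n := hω0C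
      rw [h1, h2]
    have hψsupp : ∀ i : ℤ, 0 < P (ψ i) (ψ (i + 1)) := by
      intro i
      rcases lt_trichotomy i n with hlt | rfl | hgt
      · have e1 : ψ i = y i := if_pos (le_of_lt hlt)
        have e2 : ψ (i + 1) = y (i + 1) := if_pos (by omega)
        rw [e1, e2]; exact hy1 i
      · have e1 : ψ i = y i := if_pos le_rfl
        have e2 : ψ (i + 1) = ω0 (i + 1) := if_neg (by omega)
        rw [e1, e2, hyn]; exact hω0supp i
      · have e1 : ψ i = ω0 i := if_neg (by omega)
        have e2 : ψ (i + 1) = ω0 (i + 1) := if_neg (by omega)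
        rw [e1, e2]; exact hω0supp i
    -- ψ is in the s-set of ω0
    have hψs : ψ ∈ {ω : ℤ → Fin k | (∀ i : ℤ, 0 < P (ω i) (ω (i + 1))) ∧
        ∀ i : ℤ, n ≤ i → ω i = ω0 i} := by
      refine ⟨hψsupp, fun i hi => ?_⟩
      rcases eq_or_lt_of_le hi with rfl | hlt
      · rw [show ψ n = y n from if_pos le_rfl, hyn]
      · exact if_neg (by omega)
    -- ω0 is saturated
    have hω0sat : ω0 ∈ A → _ := not_not.mp (fun hb => hω0N (hNsub hb))
    have hψA : ψ ∈ A := (hω0sat hω0A).1 hψs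
    -- ψ is saturated
    have hψN : ψ ∉ N := fun h => hψN' (Set.mem_union_left _ h)
    have hψsat : ψ ∈ A → _ := not_not.mp (fun hb => hψN (hNsub hb))
    -- y is in the u-set of ψ
    have hyu : y ∈ {ω : ℤ → Fin k | (∀ i : ℤ, 0 < P (ω i) (ω (i + 1))) ∧
        ∀ i : ℤ, i ≤ n → ω i = ψ i} :=
      ⟨hy1, fun i hi => (if_pos hi).symm⟩
    exact (hψsat hψA).2 hyu
  -- conclude
  have hnull : μ {y | ¬ (y ∈ C → y ∈ A)} = 0 := ae_iff.mp hmain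
  apply measure_mono_null _ hnull
  intro y hy
  simp only [Set.mem_diff] at hy
  exact fun himp => hy.2 (himp hy.1)
end
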